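/- Under the hypotheses above, the ObjectRank ranking R_OR is the unique ⪯-minimum element among ranking functions on G satisfying Δ: for every ranking function R whose induced ranked context satisfies Δ, R_OR(g) ≤ R(g) for all g ∈ G. -/
import Mathlib


def mins {α : Type*} (r : α → α → Prop) (B : Set α) : Set α :=
  {g ∈ B | ¬ ∃ h ∈ B, r h g}

inductive CAttr (M : Type*) where
  | atom : M → CAttr M
  | neg  : CAttr M → CAttr M
  | and  : CAttr M → CAttr M → CAttr M
  | or   : CAttr M → CAttr M → CAttr M

def extent {G M : Type*} (I : G → M → Prop) : CAttr M → Set G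
  | .atom m  => {g | I g m}
  | .neg φ   => (extent I φ)ᶜ
  | .and φ ψ => extent I φ ∩ extent I ψ
  | .or φ ψ  => extent I φ ∪ extent I ψ

/-- An object classically satisfies the materialisation `φ → ψ` of a conditional. -/
def matSat {G M : Type*} (I : G → M → Prop) (g : G) (c : CAttr M × CAttr M) : Prop :=
  g ∈ extent I c.1 → g ∈ extent I c.2

/-- `Δ`-validity of a formal context. -/
def DeltaValid {G M : Type*} (I : G → M → Prop) (Δ : Set (CAttr M × CAttr M)) : Prop :=
  ∀ Δi ⊆ Δ, Δi.Nonempty →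
    ∃ g : G, (∀ c ∈ Δi, matSat I g c) ∧ ∃ c ∈ Δi, g ∈ extent I c.1

/-- State of the `ObjectRank` algorithm at iteration `n`: the remaining
conditionals under consideration and the remaining (not yet ranked) objects. -/
def orState {G M : Type*} (I : G → M → Prop) (Δ : Set (CAttr M × CAttr M)) :
    ℕ → Set (CAttr M × CAttr M) × Set G
  | 0 => (Δ, Set.univ)
  | n + 1 =>
      let D := (orState I Δ n).1
      let Rem := (orState I Δ n).2
      let Rank := {g ∈ Rem | ∀ c ∈ D, matSat I g c}
      (D \ {c ∈ D | ∃ g ∈ Rank, g ∈ extent I c.1}, Rem \ Rank)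

/-- The objects assigned rank `n` by `ObjectRank`. -/
def orRank {G M : Type*} (I : G → M → Prop) (Δ : Set (CAttr M × CAttr M)) (n : ℕ) :
    Set G :=
  {g ∈ (orState I Δ n).2 | ∀ c ∈ (orState I Δ n).1, matSat I g c}

/-- The ranking function produced by `ObjectRank`. -/
noncomputable def objectRank {G M : Type*} (I : G → M → Prop)
    (Δ : Set (CAttr M × CAttr M)) (g : G) : ℕ :=
  sInf {n : ℕ | g ∈ orRank I Δ n}

/-- Satisfaction of a defeasible conditional in the ranked context induced by a
ranking function `R` (preference `g ≺ h` iff `R g < R h`). -/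
def rankSat {G M : Type*} (I : G → M → Prop) (R : G → ℕ) (c : CAttr M × CAttr M) :
    Prop :=
  mins (fun a b => R a < R b) (extent I c.1) ⊆ extent I c.2

/-- Convexity of a ranking function: no empty rank below an occupied rank. -/
def RankConvex {G : Type*} (R : G → ℕ) : Prop :=
  ∀ i : ℕ, (∃ g, R g = i) → ∀ j ≤ i, ∃ h, R h = j

lemma orState_fst_succ {G M : Type*} (I : G → M → Prop)
    (Δ : Set (CAttr M × CAttr M)) (n : ℕ) :
    (orState I Δ (n+1)).1 ⊆ (orState I Δ n).1 := by
  intro c hc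
  simp only [orState] at hc
  exact hc.1

lemma orState_fst_mono {G M : Type*} (I : G → M → Prop)
    (Δ : Set (CAttr M × CAttr M)) {m n : ℕ} (h : m ≤ n) :
    (orState I Δ n).1 ⊆ (orState I Δ m).1 := by
  induction n with
  | zero => simpa [Nat.le_zero.mp h]
  | succ k ih =>
    rcases Nat.lt_or_ge m (k+1) with h' | h'
    · exact (ih (Nat.lt_succ_iff.mp h')).trans' (orState_fst_succ I Δ k)
    · have : m = k + 1 := le_antisymm h h'
      subst this; exact fun _ h => h

lemma orState_fst_subset {G M : Type*} (I : G → M → Prop)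
    (Δ : Set (CAttr M × CAttr M)) (n : ℕ) :
    (orState I Δ n).1 ⊆ Δ := by
  have := orState_fst_mono I Δ (Nat.zero_le n)
  simpa [orState] using this

lemma orState_snd_succ {G M : Type*} (I : G → M → Prop)
    (Δ : Set (CAttr M × CAttr M)) (n : ℕ) :
    (orState I Δ (n+1)).2 = (orState I Δ n).2 \ orRank I Δ n := by
  rfl

lemma not_rem {G M : Type*} (I : G → M → Prop)
    (Δ : Set (CAttr M × CAttr M)) {n : ℕ} {g : G}
    (h : g ∉ (orState I Δ n).2) : ∃ m < n, g ∈ orRank I Δ m := by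
  induction n with
  | zero => exact absurd (Set.mem_univ g) h
  | succ k ih =>
    rw [orState_snd_succ] at h
    by_cases hk : g ∈ (orState I Δ k).2
    · refine ⟨k, Nat.lt_succ_self k, ?_⟩
      by_contra hr
      exact h ⟨hk, hr⟩
    · obtain ⟨m, hm, hmr⟩ := ih hk
      exact ⟨m, hm.trans (Nat.lt_succ_self k), hmr⟩

lemma removed_of_rank {G M : Type*} (I : G → M → Prop)
    (Δ : Set (CAttr M × CAttr M)) {m : ℕ} {h : G} {c : CAttr M × CAttr M}
    (hh : h ∈ orRank I Δ m) (hext : h ∈ extent I c.1) :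
    c ∉ (orState I Δ (m+1)).1 := by
  intro hc
  simp only [orState, Set.mem_diff, Set.mem_setOf_eq] at hc
  exact hc.2 ⟨hc.1, h, hh, hext⟩

lemma key {G M : Type*} (I : G → M → Prop)
    (Δ : Set (CAttr M × CAttr M)) (R : G → ℕ)
    (hsat : ∀ c ∈ Δ, rankSat I R c) :
    ∀ n : ℕ, ∀ g : G, R g = n → ∃ m ≤ n, g ∈ orRank I Δ m := by
  intro n
  induction n using Nat.strong_induction_on with
  | _ n ih =>
    intro g hg
    by_cases hrem : g ∈ (orState I Δ n).2
    · refine ⟨n, le_refl n, hrem, ?_⟩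
      intro c hc hgc
      have hcΔ : c ∈ Δ := orState_fst_subset I Δ n hc
      apply hsat c hcΔ
      refine ⟨hgc, ?_⟩
      rintro ⟨h, hh, hlt⟩
      rw [hg] at hlt
      obtain ⟨m, hm, hmr⟩ := ih (R h) hlt h rfl
      have hmn : m + 1 ≤ n := Nat.succ_le_of_lt (lt_of_le_of_lt hm hlt)
      exact removed_of_rank I Δ hmr hh (orState_fst_mono I Δ hmn hc)
    · obtain ⟨m, hm, hmr⟩ := not_rem I Δ hrem
      exact ⟨m, le_of_lt hm, hmr⟩

/-- The `ObjectRank` ranking is the unique `⪯`-minimum among convex ranking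
functions satisfying `Δ`: it is pointwise below every such ranking. -/
theorem objectRank_minimum {G M : Type*} [Finite G] (I : G → M → Prop)
    (Δ : Set (CAttr M × CAttr M)) (hfin : Δ.Finite) (hvalid : DeltaValid I Δ) :
    ∀ R : G → ℕ, RankConvex R → (∀ c ∈ Δ, rankSat I R c) →
      ∀ g, objectRank I Δ g ≤ R g := by
  intro R _ hsat g
  obtain ⟨m, hm, hmr⟩ := key I Δ R hsat (R g) g rfl
  exact (Nat.sInf_le hmr).trans hm
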